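/- arXiv:1007.3944 — 2 statements merged into one kernel-verified Lean document; each statement's English description precedes it below -/
import Mathlib

section
/- For any field K, any n, m ∈ ℕ, q ≥ 2, and 0 ≤ d ≤ n², the minimal dimension of the q-th graded component over all quadratic K-algebras with mn generators and m²d relations is at most m^q times the minimal dimension of the q-th component over quadratic K-algebras with n generators and d relations: h_q(K, mn, m²d) ≤ m^q · h_q(K, n, d). -/
open TensorProduct

namespace GS

variable (K : Type*) [Field K] (V : Type*) [AddCommGroup V] [Module K V]

/-- The tensor product of two subspaces, as a subspace of the tensor product. -/
noncomputable def tsub {M N : Type*} [AddCommGroup M] [Module K M] [AddCommGroup N] [Module K N]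
    (A : Submodule K M) (B : Submodule K N) : Submodule K (M ⊗[K] N) :=
  LinearMap.range (TensorProduct.map A.subtype B.subtype)

/-- `V ≃ V^{⊗1}`. -/
noncomputable def pow1 : V ≃ₗ[K] ⨂[K]^1 V :=
  (PiTensorProduct.subsingletonEquiv (s := fun _ => V) (0 : Fin 1)).symm

/-- `V ⊗ V ≃ V^{⊗2}`. -/
noncomputable def pow2 : (V ⊗[K] V) ≃ₗ[K] ⨂[K]^2 V :=
  (TensorProduct.congr (pow1 K V) (pow1 K V)).trans
    ((TensorPower.mulEquiv (n := 1) (m := 1)).trans (TensorPower.cast K V (by norm_num)))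

/-- The subspace `V^{⊗a} ⊗ L ⊗ V^{⊗b}` of `V^{⊗(a+(2+b))}`. -/
noncomputable def segAux (a b : ℕ) (L : Submodule K (V ⊗[K] V)) :
    Submodule K (⨂[K]^(a + (2 + b)) V) :=
  Submodule.map (TensorPower.mulEquiv (n := a) (m := 2 + b)).toLinearMap
    (tsub K (⊤ : Submodule K (⨂[K]^a V))
      (Submodule.map (TensorPower.mulEquiv (n := 2) (m := b)).toLinearMap
        (tsub K (L.map (pow2 K V).toLinearMap) (⊤ : Submodule K (⨂[K]^b V)))))

/-- For `j : Fin (q-1)`, the subspace `V^{⊗j} ⊗ L ⊗ V^{⊗(q-2-j)}` of `V^{⊗q}`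
(the `(j+1)`-st shift of `L`). -/
noncomputable def shiftSub (q : ℕ) (L : Submodule K (V ⊗[K] V)) (j : Fin (q - 1)) :
    Submodule K (⨂[K]^q V) :=
  Submodule.map (TensorPower.cast K V (by have := j.2; omega : (j : ℕ) + (2 + (q - 2 - j)) = q)).toLinearMap
    (segAux K V j (q - 2 - j) L)

/-- `E_q(L,V) = ⋂_{j=1}^{q-1} V^{⊗(j-1)} ⊗ L ⊗ V^{⊗(q-1-j)} ⊆ V^{⊗q}`. -/
noncomputable def Eint (q : ℕ) (L : Submodule K (V ⊗[K] V)) : Submodule K (⨂[K]^q V) :=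
  ⨅ j : Fin (q - 1), shiftSub K V q L j

/-- The degree-`q` component of the two-sided ideal generated by the subspace
`M ⊆ V ⊗ V` of quadratic relations: the sum of all shifts `V^{⊗(j-1)} ⊗ M ⊗ V^{⊗(q-1-j)}`. -/
noncomputable def idealComp (q : ℕ) (M : Submodule K (V ⊗[K] V)) : Submodule K (⨂[K]^q V) :=
  ⨆ j : Fin (q - 1), shiftSub K V q M j

/-- The dimension of the degree-`q` component of the quadratic algebra with space of
relations `M ⊆ V ⊗ V` (the quotient of `V^{⊗q}` by the degree-`q` component of the ideal). -/
noncomputable def quadDim (q : ℕ) (M : Submodule K (V ⊗[K] V)) : ℕ :=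
  Module.finrank K ((⨂[K]^q V) ⧸ idealComp K V q M)

/-- `h_q(K,n,d)`: the minimal dimension of the `q`-th graded component over all quadratic
`K`-algebras with `n` generators and `d` (linearly independent) quadratic relations. -/
noncomputable def hq (n d q : ℕ) : ℕ :=
  sInf { h | ∃ M : Submodule K ((Fin n → K) ⊗[K] (Fin n → K)),
      Module.finrank K M = d ∧ quadDim K (Fin n → K) q M = h }

end GS

/-!
Take relations `M ⊆ V ⊗ V` (with `dim V = n`, `dim M = d`) realising `h_q(K, n, d)`, let
`dim U = m` and identify `W := U ⊗ V` with `K^{mn}`. The relations `(U ⊗ U) ⊗ M ⊆ W ⊗ W` have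
dimension `m²d`. Under the canonical isomorphism `U^{⊗q} ⊗ V^{⊗q} ≅ W^{⊗q}`, the subspace
`U^{⊗q} ⊗ (V^{⊗j} ⊗ M ⊗ V^{⊗(q-2-j)})` lands in `W^{⊗j} ⊗ ((U ⊗ U) ⊗ M) ⊗ W^{⊗(q-2-j)}`, so the
degree-`q` ideal component of the new relations has dimension at least `m^q` times that of the
old one. Subtracting from `dim W^{⊗q} = m^q n^q` gives the bound.
-/

noncomputable section

namespace GS

open PiTensorProduct Module

variable {K : Type*} [Field K]
variable {U V W : Type*} [AddCommGroup U] [Module K U] [AddCommGroup V] [Module K V]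
  [AddCommGroup W] [Module K W]

lemma pow1_apply (x : V) : pow1 K V x = tprod K fun _ => x := by
  rw [pow1, LinearEquiv.symm_apply_eq, subsingletonEquiv_apply_tprod]

lemma mulEquiv_tprod {a b : ℕ} (x : Fin a → V) (y : Fin b → V) :
    TensorPower.mulEquiv (tprod K x ⊗ₜ tprod K y) = tprod K (Fin.append x y) := by
  rw [← TensorPower.gMul_def, TensorPower.tprod_mul_tprod]

lemma pow2_tmul (x y : V) : pow2 K V (x ⊗ₜ y) = tprod K ![x, y] := by
  simp only [pow2, LinearEquiv.trans_apply, congr_tmul, pow1_apply, mulEquiv_tprod,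
    TensorPower.cast_tprod]
  congr 1
  funext i
  fin_cases i <;> rfl

lemma finrank_tensorPower [FiniteDimensional K V] (k : ℕ) :
    finrank K (⨂[K]^k V) = finrank K V ^ k := by
  rw [finrank_eq_card_basis (Basis.piTensorProduct fun _ : Fin k => finBasis K V)]
  simp

lemma tsub_eq_map₂ {M N : Type*} [AddCommGroup M] [Module K M] [AddCommGroup N] [Module K N]
    (A : Submodule K M) (B : Submodule K N) : tsub K A B = Submodule.map₂ (mk K M N) A B :=
  range_mapIncl A B

lemma finrank_tsub {M N : Type*} [AddCommGroup M] [Module K M] [AddCommGroup N] [Module K N]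
    (A : Submodule K M) (B : Submodule K N) :
    finrank K (tsub K A B) = finrank K A * finrank K B := by
  have hinj : Function.Injective (map A.subtype B.subtype) := by
    rw [← LinearMap.lTensor_comp_rTensor]
    exact (Module.Flat.lTensor_preserves_injective_linearMap _ B.injective_subtype).comp
      (Module.Flat.rTensor_preserves_injective_linearMap _ A.injective_subtype)
  rw [tsub, LinearMap.finrank_range_of_inj hinj, finrank_tensorProduct]

variable (V) in
def segTmul {q : ℕ} (j : Fin (q - 1)) (x : ⨂[K]^j V) (z : ⨂[K]^2 V) (y : ⨂[K]^(q - 2 - j) V) :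
    ⨂[K]^q V :=
  TensorPower.cast K V (by have := j.2; omega)
    (TensorPower.mulEquiv (x ⊗ₜ TensorPower.mulEquiv (z ⊗ₜ y)))

lemma shiftSub_le_iff {q : ℕ} {L : Submodule K (V ⊗[K] V)} {j : Fin (q - 1)}
    {T : Submodule K (⨂[K]^q V)} :
    shiftSub K V q L j ≤ T ↔ ∀ x, ∀ l ∈ L, ∀ y, segTmul V j x (pow2 K V l) y ∈ T := by
  refine ⟨fun h x l hl y => h ?_, fun h => ?_⟩
  · rw [shiftSub, segAux, tsub_eq_map₂, tsub_eq_map₂]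
    exact Submodule.mem_map_of_mem <| Submodule.mem_map_of_mem <|
      Submodule.apply_mem_map₂ _ Submodule.mem_top <| Submodule.mem_map_of_mem <|
        Submodule.apply_mem_map₂ _ (Submodule.mem_map_of_mem hl) Submodule.mem_top
  · rw [shiftSub, segAux, Submodule.map_le_iff_le_comap, Submodule.map_le_iff_le_comap,
      tsub_eq_map₂, Submodule.map₂_le]
    rintro x - _ ⟨w, hw, rfl⟩
    rw [tsub_eq_map₂] at hw
    refine Submodule.mem_comap.1 ((Submodule.map₂_le (r := Submodule.comap ((mk K _ _ x).comp
      (TensorPower.mulEquiv (n := 2) (m := q - 2 - j)).toLinearMap) _)).2 ?_ hw)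
    rintro _ ⟨l, hl, rfl⟩ y -
    exact h x l hl y

lemma segTmul_mem_shiftSub {q : ℕ} {L : Submodule K (V ⊗[K] V)} (j : Fin (q - 1)) (x : ⨂[K]^j V)
    {l : V ⊗[K] V} (hl : l ∈ L) (y : ⨂[K]^(q - 2 - j) V) :
    segTmul V j x (pow2 K V l) y ∈ shiftSub K V q L j :=
  shiftSub_le_iff.1 le_rfl x l hl y

lemma shiftSub_top (q : ℕ) (j : Fin (q - 1)) : shiftSub K V q ⊤ j = ⊤ := by
  simp [shiftSub, segAux, tsub_eq_map₂, map₂_mk_top_top_eq_top]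

section

variable (e : U ⊗[K] V ≃ₗ[K] W)

def tpowTensor (k : ℕ) :
    (⨂[K]^k U) ⊗[K] (⨂[K]^k V) →ₗ[K] ⨂[K]^k W :=
  lift (PiTensorProduct.map₂ fun _ => (mk K U V).compr₂ e.toLinearMap)

@[simp]
lemma tpowTensor_tprod_tmul {k : ℕ} (u : Fin k → U) (v : Fin k → V) :
    tpowTensor e k (tprod K u ⊗ₜ tprod K v) = tprod K fun i => e (u i ⊗ₜ v i) := by
  simp [tpowTensor, map₂_tprod_tprod]

lemma tpowTensor_injective (k : ℕ) :
    Function.Injective (tpowTensor e k) := by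
  let bU := Basis.ofVectorSpace K U
  let bV := Basis.ofVectorSpace K V
  let b := (Basis.piTensorProduct fun _ : Fin k => bU).tensorProduct
    (Basis.piTensorProduct fun _ : Fin k => bV)
  let c := Basis.piTensorProduct fun _ : Fin k => (bU.tensorProduct bV).map e
  have h : tpowTensor e k = b.equiv c (Equiv.arrowProdEquivProdArrow _ _ _).symm :=
    b.ext fun p => by
      rw [LinearEquiv.coe_coe, Basis.equiv_apply]
      simp [b, c, Basis.piTensorProduct_apply, Basis.tensorProduct_apply']
  rw [h]
  exact LinearEquiv.injective _

lemma tpowTensor_mulEquiv {a b : ℕ} (x₁ : ⨂[K]^a U) (x₂ : ⨂[K]^b U) (y₁ : ⨂[K]^a V)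
    (y₂ : ⨂[K]^b V) :
    tpowTensor e (a + b) (TensorPower.mulEquiv (x₁ ⊗ₜ x₂) ⊗ₜ TensorPower.mulEquiv (y₁ ⊗ₜ y₂)) =
      TensorPower.mulEquiv (tpowTensor e a (x₁ ⊗ₜ y₁) ⊗ₜ tpowTensor e b (x₂ ⊗ₜ y₂)) := by
  have key : tpowTensor e (a + b) ∘ₗ
        map (TensorPower.mulEquiv (n := a) (m := b)).toLinearMap
          (TensorPower.mulEquiv (n := a) (m := b)).toLinearMap ∘ₗ
        (tensorTensorTensorComm K (⨂[K]^a U) (⨂[K]^a V) (⨂[K]^b U) (⨂[K]^b V)).toLinearMap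
      = (TensorPower.mulEquiv (n := a) (m := b)).toLinearMap ∘ₗ
        map (tpowTensor e a) (tpowTensor e b) := by
    ext u₁ v₁ u₂ v₂
    simp only [LinearMap.comp_apply, LinearMap.compMultilinearMap_apply, LinearEquiv.coe_coe,
      map_tmul, tensorTensorTensorComm_tmul, mulEquiv_tprod, tpowTensor_tprod_tmul,
      AlgebraTensorModule.curry_apply, curry_apply, LinearMap.coe_restrictScalars]
    congr 1
    funext i
    refine Fin.addCases (fun j => ?_) (fun j => ?_) i <;> simp
  simpa using LinearMap.congr_fun key ((x₁ ⊗ₜ y₁) ⊗ₜ (x₂ ⊗ₜ y₂))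

lemma tpowTensor_cast {i j : ℕ} (h : i = j) (x : ⨂[K]^i U) (y : ⨂[K]^i V) :
    tpowTensor e j (TensorPower.cast K U h x ⊗ₜ TensorPower.cast K V h y) =
      TensorPower.cast K W h (tpowTensor e i (x ⊗ₜ y)) := by
  subst h
  simp

def tensorSqEquiv : ((U ⊗[K] U) ⊗[K] (V ⊗[K] V)) ≃ₗ[K] (W ⊗[K] W) :=
  (tensorTensorTensorComm K U U V V).trans (congr e e)

lemma tpowTensor_pow2 (z : U ⊗[K] U) (l : V ⊗[K] V) :
    tpowTensor e 2 (pow2 K U z ⊗ₜ pow2 K V l) = pow2 K W (tensorSqEquiv e (z ⊗ₜ l)) := by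
  have key : tpowTensor e 2 ∘ₗ map (pow2 K U).toLinearMap (pow2 K V).toLinearMap
      = (pow2 K W).toLinearMap ∘ₗ (tensorSqEquiv e).toLinearMap := by
    ext x₁ x₂ y₁ y₂
    simp only [LinearMap.comp_apply, LinearEquiv.coe_coe, map_tmul, pow2_tmul,
      tpowTensor_tprod_tmul, tensorSqEquiv, LinearEquiv.trans_apply,
      tensorTensorTensorComm_tmul, congr_tmul, AlgebraTensorModule.curry_apply, curry_apply,
      LinearMap.coe_restrictScalars]
    congr 1
    funext i
    fin_cases i <;> rfl
  simpa using LinearMap.congr_fun key (z ⊗ₜ l)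

lemma tpowTensor_segTmul {q : ℕ} (j : Fin (q - 1)) (x : ⨂[K]^j U)
    (z : ⨂[K]^2 U) (y : ⨂[K]^(q - 2 - j) U) (x' : ⨂[K]^j V) (z' : ⨂[K]^2 V)
    (y' : ⨂[K]^(q - 2 - j) V) :
    tpowTensor e q (segTmul U j x z y ⊗ₜ segTmul V j x' z' y') =
      segTmul W j (tpowTensor e j (x ⊗ₜ x')) (tpowTensor e 2 (z ⊗ₜ z'))
        (tpowTensor e (q - 2 - j) (y ⊗ₜ y')) := by
  simp only [segTmul, tpowTensor_cast, tpowTensor_mulEquiv]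

def tensorRel (M : Submodule K (V ⊗[K] V)) : Submodule K (W ⊗[K] W) :=
  (tsub K ⊤ M).map (tensorSqEquiv e).toLinearMap

lemma tensorSqEquiv_tmul_mem_tensorRel {M : Submodule K (V ⊗[K] V)} (z : U ⊗[K] U)
    {l : V ⊗[K] V} (hl : l ∈ M) : tensorSqEquiv e (z ⊗ₜ l) ∈ tensorRel e M := by
  rw [tensorRel, tsub_eq_map₂]
  exact Submodule.mem_map_of_mem (Submodule.apply_mem_map₂ _ Submodule.mem_top hl)

lemma finrank_tensorRel [FiniteDimensional K U] (M : Submodule K (V ⊗[K] V)) :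
    finrank K (tensorRel e M) = finrank K U ^ 2 * finrank K M := by
  rw [tensorRel, LinearEquiv.finrank_map_eq, finrank_tsub, finrank_top, finrank_tensorProduct,
    sq]

lemma map_tpowTensor_shiftSub_le (M : Submodule K (V ⊗[K] V)) {q : ℕ} (j : Fin (q - 1)) :
    (tsub K ⊤ (shiftSub K V q M j)).map (tpowTensor e q) ≤ shiftSub K W q (tensorRel e M) j := by
  rw [tsub_eq_map₂, Submodule.map_le_iff_le_comap, Submodule.map₂_le]
  intro t _ s hs
  -- Reduce `s` and then `t` (which lies in the shift of `⊤`) to elementary shifted tensors.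
  refine (shiftSub_le_iff (T := Submodule.comap
    (tpowTensor e q ∘ₗ mk K (⨂[K]^q U) (⨂[K]^q V) t) _)).2 (fun x' l hl y' => ?_) hs
  have ht : t ∈ shiftSub K U q ⊤ j := by
    rw [shiftSub_top]; exact Submodule.mem_top
  refine (shiftSub_le_iff (T := Submodule.comap
    (tpowTensor e q ∘ₗ (mk K (⨂[K]^q U) (⨂[K]^q V)).flip (segTmul V j x' (pow2 K V l) y')) _)).2
    (fun x z _ y => ?_) ht
  rw [Submodule.mem_comap, LinearMap.comp_apply, LinearMap.flip_apply, mk_apply,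
    tpowTensor_segTmul, tpowTensor_pow2]
  exact segTmul_mem_shiftSub j _ (tensorSqEquiv_tmul_mem_tensorRel e z hl) _

lemma map_tpowTensor_idealComp_le (M : Submodule K (V ⊗[K] V)) (q : ℕ) :
    (tsub K ⊤ (idealComp K V q M)).map (tpowTensor e q) ≤ idealComp K W q (tensorRel e M) := by
  rw [idealComp, tsub_eq_map₂, Submodule.map₂_iSup_right, Submodule.map_iSup]
  exact iSup_mono fun j => by simpa only [tsub_eq_map₂] using map_tpowTensor_shiftSub_le e M j

lemma quadDim_tensorRel_le [FiniteDimensional K U] [FiniteDimensional K V]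
    (M : Submodule K (V ⊗[K] V)) (q : ℕ) :
    quadDim K W q (tensorRel e M) ≤ finrank K U ^ q * quadDim K V q M := by
  have : FiniteDimensional K W := e.finiteDimensional
  have hW : finrank K W = finrank K U * finrank K V := by
    rw [← e.finrank_eq, finrank_tensorProduct]
  have hideal := Submodule.finrank_mono (map_tpowTensor_idealComp_le e M q)
  rw [← (Submodule.equivMapOfInjective _ (tpowTensor_injective e q) _).finrank_eq, finrank_tsub,
    finrank_top, finrank_tensorPower] at hideal
  have hsumV := Submodule.finrank_quotient_add_finrank (idealComp K V q M)
  have hsumW := Submodule.finrank_quotient_add_finrank (idealComp K W q (tensorRel e M))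
  rw [finrank_tensorPower] at hsumV hsumW
  rw [hW, mul_pow] at hsumW
  have hsumV' := congrArg (finrank K U ^ q * ·) hsumV
  simp only [mul_add] at hsumV'
  unfold quadDim
  omega

end

lemma exists_submodule_finrank_eq [FiniteDimensional K V] {d : ℕ} (hd : d ≤ finrank K V) :
    ∃ M : Submodule K V, finrank K M = d := by
  let b := finBasis K V
  refine ⟨Submodule.span K (Set.range (b ∘ Fin.castLE hd)), ?_⟩
  rw [finrank_span_eq_card (b.linearIndependent.comp _ (Fin.castLE_injective hd)),
    Fintype.card_fin]

lemma exists_quadDim_eq_hq {n d : ℕ} (q : ℕ) (hd : d ≤ n ^ 2) :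
    ∃ M : Submodule K ((Fin n → K) ⊗[K] (Fin n → K)),
      finrank K M = d ∧ quadDim K (Fin n → K) q M = hq K n d q := by
  obtain ⟨M, hM⟩ := exists_submodule_finrank_eq (K := K)
    (V := (Fin n → K) ⊗[K] (Fin n → K)) (d := d) (by simpa [sq] using hd)
  exact Nat.sInf_mem (s := {h | ∃ M : Submodule K ((Fin n → K) ⊗[K] (Fin n → K)),
    finrank K M = d ∧ quadDim K (Fin n → K) q M = h}) ⟨_, M, hM, rfl⟩

end GS

end

theorem hq_mul_le_general (K : Type*) [Field K] (n m q d : ℕ) (hd : d ≤ n ^ 2) :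
    GS.hq K (m * n) (m ^ 2 * d) q ≤ m ^ q * GS.hq K n d q := by
  obtain ⟨M, hMd, hMq⟩ := GS.exists_quadDim_eq_hq (K := K) q hd
  let e : (Fin m → K) ⊗[K] (Fin n → K) ≃ₗ[K] (Fin (m * n) → K) :=
    LinearEquiv.ofFinrankEq _ _ (by simp [Module.finrank_tensorProduct])
  calc GS.hq K (m * n) (m ^ 2 * d) q ≤ GS.quadDim K (Fin (m * n) → K) q (GS.tensorRel e M) :=
        Nat.sInf_le ⟨_, by simp [GS.finrank_tensorRel, hMd], rfl⟩
    _ ≤ m ^ q * GS.hq K n d q := by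
        simpa [hMq] using GS.quadDim_tensorRel_le e M q

/-- For any field `K`, `n, m ∈ ℕ`, `q ≥ 2` and `0 ≤ d ≤ n²`,
`h_q(K, mn, m²d) ≤ m^q · h_q(K, n, d)`. -/
theorem hq_mul_le (K : Type*) [Field K] (n m q d : ℕ) (hq2 : 2 ≤ q) (hd : d ≤ n ^ 2) :
    GS.hq K (m * n) (m ^ 2 * d) q ≤ m ^ q * GS.hq K n d q :=
  hq_mul_le_general K n m q d hd
end

section
/- Let K be a field, q ≥ 3, n, m ∈ ℕ, 0 ≤ d ≤ n². If h_q(K, n, d) = 0 (i.e., some quadratic K-algebra with n generators and d quadratic relations has vanishing q-th graded component), then h_q(K, mn, m²d) = 0. -/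
open TensorProduct

/-!
Suppose the relations `M ⊆ V ⊗ V` generate all of `V^{⊗q}`. On the generators `W ⊗ V` take the
relations `(W ⊗ W) ⊗ M`. For any `w₁, …, w_q ∈ W`, the maps `fᵢ : v ↦ wᵢ ⊗ v` satisfy
`(fᵢ ⊗ fⱼ)(M) ⊆ (W ⊗ W) ⊗ M`, so `⨂ᵢ fᵢ` sends the ideal of `M` into the new ideal. Its image contains every `⨂ᵢ (wᵢ ⊗ vᵢ)`, and these span `(W ⊗ V)^{⊗q}`. Taking
`W = K^m` gives `mn` generators and `m²d` relations.
-/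

namespace GS

open PiTensorProduct

variable {K : Type*} [Field K] {V V' : Type*} [AddCommGroup V] [Module K V]
  [AddCommGroup V'] [Module K V']

section tsub

variable {M N M' N' : Type*} [AddCommGroup M] [Module K M] [AddCommGroup N] [Module K N]
  [AddCommGroup M'] [Module K M'] [AddCommGroup N'] [Module K N']

lemma tmul_mem_tsub {A : Submodule K M} {B : Submodule K N} {a : M} {b : N}
    (ha : a ∈ A) (hb : b ∈ B) : a ⊗ₜ[K] b ∈ tsub K A B :=
  ⟨(⟨a, ha⟩ : A) ⊗ₜ (⟨b, hb⟩ : B), rfl⟩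

lemma tsub_mono {A A' : Submodule K M} {B B' : Submodule K N} (hA : A ≤ A') (hB : B ≤ B') :
    tsub K A B ≤ tsub K A' B' := by
  rw [tsub, TensorProduct.range_map_eq_span_tmul, Submodule.span_le]
  rintro _ ⟨a, b, rfl⟩
  exact tmul_mem_tsub (hA a.2) (hB b.2)

lemma map_tsub_le (f : M →ₗ[K] M') (g : N →ₗ[K] N') (A : Submodule K M) (B : Submodule K N) :
    (tsub K A B).map (TensorProduct.map f g) ≤ tsub K (A.map f) (B.map g) := by
  rw [tsub, ← LinearMap.range_comp, ← TensorProduct.map_comp,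
    TensorProduct.range_map_eq_span_tmul, Submodule.span_le]
  rintro _ ⟨a, b, rfl⟩
  exact tmul_mem_tsub (Submodule.mem_map_of_mem a.2) (Submodule.mem_map_of_mem b.2)

lemma finrank_tsub_top_left (B : Submodule K N) :
    Module.finrank K (tsub K (⊤ : Submodule K M) B) = Module.finrank K M * Module.finrank K B := by
  rw [tsub, LinearMap.finrank_range_of_inj
      (Module.Flat.tensorProduct_mapIncl_injective_of_right _ _),
    Module.finrank_tensorProduct, finrank_top]

end tsub

lemma map_comp_cast {r s : ℕ} (h : r = s) (φ : Fin s → V →ₗ[K] V') :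
    PiTensorProduct.map φ ∘ₗ (TensorPower.cast K V h).toLinearMap =
      (TensorPower.cast K V' h).toLinearMap ∘ₗ PiTensorProduct.map (fun i => φ (Fin.cast h i)) := by
  subst h
  ext
  simp [TensorPower.cast_refl]

lemma map_comp_mulEquiv {r s : ℕ} (φ : Fin (r + s) → V →ₗ[K] V') :
    PiTensorProduct.map φ ∘ₗ (TensorPower.mulEquiv (n := r) (m := s) (M := V)).toLinearMap =
      (TensorPower.mulEquiv (n := r) (m := s) (M := V')).toLinearMap ∘ₗ
        TensorProduct.map (PiTensorProduct.map fun i => φ (Fin.castAdd s i))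
          (PiTensorProduct.map fun i => φ (Fin.natAdd r i)) := by
  apply TensorProduct.ext
  ext u t
  simp only [LinearMap.compMultilinearMap_apply, LinearMap.compr₂ₛₗ_apply,
    TensorProduct.mk_apply, LinearMap.comp_apply, LinearEquiv.coe_coe, TensorProduct.map_tmul,
    PiTensorProduct.map_tprod]
  rw [← TensorPower.gMul_def, ← TensorPower.gMul_def, TensorPower.tprod_mul_tprod,
    TensorPower.tprod_mul_tprod, PiTensorProduct.map_tprod]
  congr 1
  funext i
  refine Fin.addCases (fun i => ?_) (fun i => ?_) i <;> simp

lemma map_comp_pow2 (φ : Fin 2 → V →ₗ[K] V') :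
    PiTensorProduct.map φ ∘ₗ (pow2 K V).toLinearMap =
      (pow2 K V').toLinearMap ∘ₗ TensorProduct.map (φ 0) (φ 1) := by
  apply TensorProduct.ext'
  intro x y
  simp only [LinearMap.comp_apply, LinearEquiv.coe_coe, TensorProduct.map_tmul, pow2,
    LinearEquiv.trans_apply, TensorProduct.congr_tmul, pow1,
    PiTensorProduct.subsingletonEquiv_symm_apply]
  rw [← TensorPower.gMul_def, ← TensorPower.gMul_def, TensorPower.tprod_mul_tprod,
    TensorPower.tprod_mul_tprod, TensorPower.cast_tprod, TensorPower.cast_tprod,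
    PiTensorProduct.map_tprod]
  congr 1
  funext i
  fin_cases i <;> simp [Fin.append, Fin.addCases, Fin.cast]

lemma map_map_eq_of_comp_eq {A B C D : Type*} [AddCommGroup A] [Module K A] [AddCommGroup B]
    [Module K B] [AddCommGroup C] [Module K C] [AddCommGroup D] [Module K D]
    {f : A →ₗ[K] B} {g : B →ₗ[K] D} {f' : A →ₗ[K] C} {g' : C →ₗ[K] D}
    (hc : g ∘ₗ f = g' ∘ₗ f') (S : Submodule K A) :
    (S.map f).map g = (S.map f').map g' := by
  rw [← Submodule.map_comp, ← Submodule.map_comp, hc]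

variable {M : Submodule K (V ⊗[K] V)} {M' : Submodule K (V' ⊗[K] V')}

lemma map_segAux_le (a b : ℕ) (φ : Fin (a + (2 + b)) → V →ₗ[K] V')
    (hM : ∀ i j, M.map (TensorProduct.map (φ i) (φ j)) ≤ M') :
    (segAux K V a b M).map (PiTensorProduct.map φ) ≤ segAux K V' a b M' := by
  rw [segAux, segAux, map_map_eq_of_comp_eq (map_comp_mulEquiv φ)]
  refine Submodule.map_mono ((map_tsub_le _ _ _ _).trans (tsub_mono le_top ?_))
  rw [map_map_eq_of_comp_eq (map_comp_mulEquiv _)]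
  refine Submodule.map_mono ((map_tsub_le _ _ _ _).trans (tsub_mono ?_ le_top))
  rw [map_map_eq_of_comp_eq (map_comp_pow2 _)]
  exact Submodule.map_mono (hM _ _)

lemma map_shiftSub_le (q : ℕ) (φ : Fin q → V →ₗ[K] V')
    (hM : ∀ i j, M.map (TensorProduct.map (φ i) (φ j)) ≤ M') (j : Fin (q - 1)) :
    (shiftSub K V q M j).map (PiTensorProduct.map φ) ≤ shiftSub K V' q M' j := by
  rw [shiftSub, shiftSub, map_map_eq_of_comp_eq (map_comp_cast _ φ)]
  exact Submodule.map_mono (map_segAux_le _ _ _ fun _ _ => hM _ _)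

lemma map_idealComp_le (q : ℕ) (φ : Fin q → V →ₗ[K] V')
    (hM : ∀ i j, M.map (TensorProduct.map (φ i) (φ j)) ≤ M') :
    (idealComp K V q M).map (PiTensorProduct.map φ) ≤ idealComp K V' q M' := by
  rw [idealComp, Submodule.map_iSup]
  exact iSup_mono (map_shiftSub_le q φ hM)

lemma eq_top_of_forall_tprod_basis_mem {ι : Type*} {q : ℕ} (b : Module.Basis ι K V)
    {S : Submodule K (⨂[K]^q V)} (hS : ∀ p : Fin q → ι, tprod K (fun i => b (p i)) ∈ S) :
    S = ⊤ := by
  rw [eq_top_iff, ← (Basis.piTensorProduct fun _ => b).span_eq, Submodule.span_le]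
  rintro _ ⟨p, rfl⟩
  rw [Basis.piTensorProduct_apply]
  exact hS p

lemma idealComp_map_congr_eq_top {q : ℕ} (e : V ≃ₗ[K] V') (h : idealComp K V q M = ⊤) :
    idealComp K V' q (M.map (TensorProduct.congr e e).toLinearMap) = ⊤ := by
  have hsurj : (⊤ : Submodule K (⨂[K]^q V)).map (PiTensorProduct.congr fun _ => e).toLinearMap
      = ⊤ := by
    rw [Submodule.map_top, LinearEquiv.range]
  rw [eq_top_iff, ← hsurj, ← h]
  exact map_idealComp_le q (fun _ => e.toLinearMap) fun _ _ => le_rfl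

variable (W : Type*) [AddCommGroup W] [Module K W]

noncomputable def tensorRelations (M : Submodule K (V ⊗[K] V)) :
    Submodule K ((W ⊗[K] V) ⊗[K] (W ⊗[K] V)) :=
  (tsub K (⊤ : Submodule K (W ⊗[K] W)) M).map
    (TensorProduct.tensorTensorTensorComm K W W V V).toLinearMap

lemma finrank_tensorRelations (M : Submodule K (V ⊗[K] V)) :
    Module.finrank K (tensorRelations W M) = Module.finrank K W ^ 2 * Module.finrank K M := by
  rw [tensorRelations, LinearEquiv.finrank_map_eq, finrank_tsub_top_left,
    Module.finrank_tensorProduct, sq]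

lemma map_mk_le_tensorRelations (w w' : W) :
    M.map (TensorProduct.map (TensorProduct.mk K W V w) (TensorProduct.mk K W V w')) ≤
      tensorRelations W M := by
  have hcomp : TensorProduct.map (TensorProduct.mk K W V w) (TensorProduct.mk K W V w') =
      (TensorProduct.tensorTensorTensorComm K W W V V).toLinearMap ∘ₗ
        TensorProduct.mk K (W ⊗[K] W) (V ⊗[K] V) (w ⊗ₜ w') :=
    TensorProduct.ext' fun _ _ => by simp
  rw [hcomp, Submodule.map_comp]
  refine Submodule.map_mono ?_
  rintro _ ⟨x, hx, rfl⟩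
  exact tmul_mem_tsub Submodule.mem_top hx

lemma idealComp_tensorRelations_eq_top {q : ℕ} (h : idealComp K V q M = ⊤) :
    idealComp K (W ⊗[K] V) q (tensorRelations W M) = ⊤ := by
  let b := Module.Basis.ofVectorSpace K W
  let c := Module.Basis.ofVectorSpace K V
  refine eq_top_of_forall_tprod_basis_mem (b.tensorProduct c) fun p => ?_
  let φ : Fin q → V →ₗ[K] W ⊗[K] V := fun i => TensorProduct.mk K W V (b (p i).1)
  have hp : tprod K (fun i => b.tensorProduct c (p i)) =
      PiTensorProduct.map φ (tprod K fun i => c (p i).2) := by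
    simp [φ, Module.Basis.tensorProduct_apply']
  rw [hp]
  refine map_idealComp_le q φ (fun _ _ => map_mk_le_tensorRelations W _ _) ?_
  exact Submodule.mem_map_of_mem (h ▸ Submodule.mem_top)

lemma exists_submodule_finrank_eq_s5 {X : Type*} [AddCommGroup X] [Module K X] [FiniteDimensional K X]
    {d : ℕ} (hd : d ≤ Module.finrank K X) : ∃ N : Submodule K X, Module.finrank K N = d := by
  let b := Module.finBasis K X
  refine ⟨Submodule.span K (Set.range (b ∘ Fin.castLE hd)), ?_⟩
  rw [finrank_span_eq_card (b.linearIndependent.comp _ (Fin.castLE_injective hd)),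
    Fintype.card_fin]

lemma quadDim_eq_zero_iff [FiniteDimensional K V] {q : ℕ} :
    quadDim K V q M = 0 ↔ idealComp K V q M = ⊤ := by
  rw [quadDim, Module.finrank_zero_iff, Submodule.Quotient.subsingleton_iff]

lemma exists_idealComp_eq_top_of_hq_eq_zero {n d q : ℕ} (hd : d ≤ n ^ 2) (h : hq K n d q = 0) :
    ∃ M : Submodule K ((Fin n → K) ⊗[K] (Fin n → K)),
      Module.finrank K M = d ∧ idealComp K (Fin n → K) q M = ⊤ := by
  obtain ⟨M₀, hM₀⟩ : ∃ M₀ : Submodule K ((Fin n → K) ⊗[K] (Fin n → K)),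
      Module.finrank K M₀ = d :=
    exists_submodule_finrank_eq_s5 (by simpa [sq] using hd)
  -- `hq` is an `sInf` of a set of naturals, which is `0` also when the set is empty.
  rcases Nat.sInf_eq_zero.mp h with ⟨M, hMd, hM⟩ | hempty
  · exact ⟨M, hMd, quadDim_eq_zero_iff.mp hM⟩
  · exact absurd hempty (Set.nonempty_iff_ne_empty.mp ⟨_, M₀, hM₀, rfl⟩)

lemma hq_eq_zero_of_idealComp_eq_top {n d q : ℕ}
    (M : Submodule K ((Fin n → K) ⊗[K] (Fin n → K))) (hMd : Module.finrank K M = d)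
    (hM : idealComp K (Fin n → K) q M = ⊤) : hq K n d q = 0 :=
  Nat.sInf_eq_zero.mpr (Or.inl ⟨M, hMd, quadDim_eq_zero_iff.mpr hM⟩)

end GS

theorem hq_mul_eq_zero_general (K : Type*) [Field K] (n m q d : ℕ) (hd : d ≤ n ^ 2)
    (h : GS.hq K n d q = 0) : GS.hq K (m * n) (m ^ 2 * d) q = 0 := by
  obtain ⟨M, hMd, hM⟩ := GS.exists_idealComp_eq_top_of_hq_eq_zero hd h
  let e : (Fin m → K) ⊗[K] (Fin n → K) ≃ₗ[K] (Fin (m * n) → K) :=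
    LinearEquiv.ofFinrankEq _ _ (by simp)
  refine GS.hq_eq_zero_of_idealComp_eq_top
    ((GS.tensorRelations (Fin m → K) M).map (TensorProduct.congr e e).toLinearMap) ?_
    (GS.idealComp_map_congr_eq_top e (GS.idealComp_tensorRelations_eq_top _ hM))
  rw [LinearEquiv.finrank_map_eq, GS.finrank_tensorRelations, hMd, Module.finrank_fin_fun]

/-- If `q ≥ 3`, `0 ≤ d ≤ n²` and `h_q(K, n, d) = 0`, then
`h_q(K, mn, m²d) = 0`. -/
theorem hq_mul_eq_zero (K : Type*) [Field K] (n m q d : ℕ) (hq3 : 3 ≤ q) (hd : d ≤ n ^ 2)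
    (h : GS.hq K n d q = 0) : GS.hq K (m * n) (m ^ 2 * d) q = 0 :=
  hq_mul_eq_zero_general K n m q d hd h
end
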